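/- arXiv:2406.00738 — 5 statements merged into one kernel-verified Lean document; each statement's English description precedes it below -/
import Mathlib

section
/- Let N ≥ 1, let γ ∈ [0,1), let K satisfy 0 ≤ K ≤ N, and suppose each per-arm transition kernel satisfies P_i(1,α,1) ≥ P_i(0,α,1) for every α ∈ {0,1}. Suppose the reward R : {0,1}^N × {0,1}^N → ℝ is monotone in the state, i.e., for every fixed action a the map s ↦ R(s,a) is monotone. Then for every t ≥ 0 the value-iteration iterate V_t is monotone: V_t(s) ≤ V_t(s') whenever s ≤ s' coordinatewise. -/
/-- Number of arms pulled by a binary action vector. -/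
def pulls {N : ℕ} (a : Fin N → Bool) : ℕ := ∑ i, if a i then 1 else 0

/-- The set of budget-feasible actions. -/
def feasible (N K : ℕ) : Finset (Fin N → Bool) :=
  Finset.univ.filter (fun a => pulls a ≤ K)

lemma feasible_nonempty (N K : ℕ) : (feasible N K).Nonempty :=
  ⟨fun _ => false, by simp [feasible, pulls]⟩

/-- Joint transition probability: product of per-arm kernels. -/
def jointP {N : ℕ} (P : Fin N → Bool → Bool → Bool → ℝ)
    (s a s' : Fin N → Bool) : ℝ :=
  ∏ i, P i (s i) (a i) (s' i)

/-- Value-iteration iterates for the RMAB with global rewards. -/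
noncomputable def Viter {N : ℕ} (P : Fin N → Bool → Bool → Bool → ℝ)
    (R : (Fin N → Bool) → (Fin N → Bool) → ℝ) (γ : ℝ) (K : ℕ) :
    ℕ → (Fin N → Bool) → ℝ
  | 0 => fun _ => 0
  | t + 1 => fun s =>
      (feasible N K).sup' (feasible_nonempty N K)
        (fun a => R s a + γ * ∑ s' : Fin N → Bool, jointP P s a s' * Viter P R γ K t s')

/-!
The expectation operator `V ↦ (s ↦ E[V(s') | s, a])` of a product of per-arm kernels, each
stochastically monotone (`P_i(0,α,1) ≤ P_i(1,α,1)`), maps monotone functions to monotone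
functions. Splitting off the first arm, the expectation is `∑_b P_0(s_0, a_0, b) W(b, tail s)`
with `W` monotone in both arguments, so raising `tail s` is handled by induction on the number
of arms and raising `s_0` by first-order stochastic dominance on `Bool`. Each Bellman update then
adds a state-monotone reward and takes a maximum over actions, both of which preserve
monotonicity.
-/

open Finset

lemma sum_bool_mul_le_of_le {p q f : Bool → ℝ} (hp : p false + p true = 1)
    (hq : q false + q true = 1) (hpq : p true ≤ q true) (hf : f false ≤ f true) :
    ∑ b, p b * f b ≤ ∑ b, q b * f b := by
  rw [Fintype.sum_bool, Fintype.sum_bool, eq_sub_of_add_eq hp, eq_sub_of_add_eq hq]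
  nlinarith [mul_nonneg (sub_nonneg.2 hpq) (sub_nonneg.2 hf)]

lemma Fintype.sum_fin_succ_pi {n : ℕ} {β M : Type*} [Fintype β] [AddCommMonoid M]
    (F : (Fin (n + 1) → β) → M) : ∑ x, F x = ∑ b, ∑ r : Fin n → β, F (Fin.cons b r) :=
  (Fintype.sum_equiv (Fin.consEquiv fun _ => β) _ _ fun _ => rfl).symm.trans
    (Fintype.sum_prod_type _)

lemma jointP_nonneg {N : ℕ} {P : Fin N → Bool → Bool → Bool → ℝ}
    (hPnonneg : ∀ i σ α σ', 0 ≤ P i σ α σ') (s a s' : Fin N → Bool) :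
    0 ≤ jointP P s a s' :=
  prod_nonneg fun _ _ => hPnonneg _ _ _ _

lemma jointP_cons {n : ℕ} (P : Fin (n + 1) → Bool → Bool → Bool → ℝ)
    (s a : Fin (n + 1) → Bool) (b : Bool) (r : Fin n → Bool) :
    jointP P s a (Fin.cons b r) =
      P 0 (s 0) (a 0) b * jointP (fun i => P i.succ) (Fin.tail s) (Fin.tail a) r :=
  Fin.prod_univ_succ _

theorem monotone_sum_jointP_mul {N : ℕ} (P : Fin N → Bool → Bool → Bool → ℝ)
    (hPnonneg : ∀ i σ α σ', 0 ≤ P i σ α σ')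
    (hPsum : ∀ i σ α, P i σ α false + P i σ α true = 1)
    (hPmono : ∀ i α, P i false α true ≤ P i true α true)
    (a : Fin N → Bool) {V : (Fin N → Bool) → ℝ} (hV : Monotone V) :
    Monotone fun s => ∑ s', jointP P s a s' * V s' := by
  induction N with
  | zero => exact Subsingleton.monotone _
  | succ n ih =>
    intro s t hst
    set W : Bool → (Fin n → Bool) → ℝ := fun b u =>
      ∑ r, jointP (fun i => P i.succ) u (Fin.tail a) r * V (Fin.cons b r) with hW
    have hsplit : ∀ u, ∑ s', jointP P u a s' * V s' =
        ∑ b, P 0 (u 0) (a 0) b * W b (Fin.tail u) := by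
      intro u
      simp only [Fintype.sum_fin_succ_pi, jointP_cons, hW, mul_sum, mul_assoc]
    have hW_tail : ∀ b, Monotone (W b) := fun b =>
      ih (fun i => P i.succ) (fun _ => hPnonneg _) (fun _ => hPsum _) (fun _ => hPmono _)
        (Fin.tail a) fun _ _ h => hV (Fin.cons_le_cons.2 ⟨le_rfl, h⟩)
    have hW_head : ∀ u, W false u ≤ W true u := fun u =>
      sum_le_sum fun r _ => mul_le_mul_of_nonneg_left
        (hV (Fin.cons_le_cons.2 ⟨Bool.false_le _, le_rfl⟩))
        (jointP_nonneg (fun _ => hPnonneg _) _ _ _)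
    have hP_head : P 0 (s 0) (a 0) true ≤ P 0 (t 0) (a 0) true := by
      have h₀ := hst 0
      revert h₀
      cases s 0 <;> cases t 0 <;> simp [hPmono]
    simp only [hsplit]
    calc ∑ b, P 0 (s 0) (a 0) b * W b (Fin.tail s)
        ≤ ∑ b, P 0 (s 0) (a 0) b * W b (Fin.tail t) :=
          sum_le_sum fun b _ => mul_le_mul_of_nonneg_left
            (hW_tail b fun i => hst i.succ) (hPnonneg _ _ _ _)
      _ ≤ ∑ b, P 0 (t 0) (a 0) b * W b (Fin.tail t) :=
          sum_bool_mul_le_of_le (hPsum _ _ _) (hPsum _ _ _) hP_head (hW_head _)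

theorem stmt_0_general {N : ℕ} (γ : ℝ) (hγ0 : 0 ≤ γ)
    (K : ℕ)
    (P : Fin N → Bool → Bool → Bool → ℝ)
    (hPnonneg : ∀ i σ α σ', 0 ≤ P i σ α σ')
    (hPsum : ∀ i σ α, P i σ α false + P i σ α true = 1)
    (hPmono : ∀ i α, P i false α true ≤ P i true α true)
    (R : (Fin N → Bool) → (Fin N → Bool) → ℝ)
    (hR : ∀ a, Monotone (fun s => R s a)) :
    ∀ t, Monotone (Viter P R γ K t) := by
  intro t
  induction t with
  | zero => exact monotone_const
  | succ t ih =>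
    intro s s' hss'
    exact sup'_mono_fun (hs := feasible_nonempty N K) fun a _ =>
      add_le_add (hR a hss') <| mul_le_mul_of_nonneg_left
        (monotone_sum_jointP_mul P hPnonneg hPsum hPmono a ih hss') hγ0

/-- Value iteration preserves monotonicity of the value function in the state. -/
theorem stmt_0 {N : ℕ} (hN : 1 ≤ N) (γ : ℝ) (hγ0 : 0 ≤ γ) (hγ1 : γ < 1)
    (K : ℕ) (hK : K ≤ N)
    (P : Fin N → Bool → Bool → Bool → ℝ)
    (hPnonneg : ∀ i σ α σ', 0 ≤ P i σ α σ')
    (hPsum : ∀ i σ α, P i σ α false + P i σ α true = 1)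
    (hPmono : ∀ i α, P i false α true ≤ P i true α true)
    (R : (Fin N → Bool) → (Fin N → Bool) → ℝ)
    (hR : ∀ a, Monotone (fun s => R s a)) :
    ∀ t, Monotone (Viter P R γ K t) :=
  stmt_0_general γ hγ0 K P hPnonneg hPsum hPmono R hR
end

section
/- Let N ≥ 1 and suppose each per-arm transition kernel satisfies P_i(1,α,1) ≥ P_i(0,α,1) for every α ∈ {0,1}. Fix an action a ∈ {0,1}^N. If V : {0,1}^N → ℝ is monotone, then the map s ↦ Σ_{s' ∈ {0,1}^N} P(s,a,s') V(s') is monotone in s. -/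
open Finset

lemma Bool.sum_mul_le_sum_mul_of_monotone {p q : Bool → ℝ} (hp : ∑ b, p b = 1)
    (hq : ∑ b, q b = 1) (hpq : p true ≤ q true) {g : Bool → ℝ} (hg : Monotone g) :
    ∑ b, p b * g b ≤ ∑ b, q b * g b := by
  simp only [Fintype.sum_bool] at *
  rw [show p false = 1 - p true by linarith, show q false = 1 - q true by linarith]
  nlinarith [mul_le_mul_of_nonneg_right hpq (sub_nonneg.2 (hg (by decide) : g false ≤ g true))]

namespace Equiv

variable {ι β : Type*} [DecidableEq ι]

lemma monotone_funSplitAt_symm_fst [Preorder β] (j : ι) (r : {i // i ≠ j} → β) :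
    Monotone fun b => (funSplitAt j β).symm (b, r) := by
  intro b c hbc k
  by_cases hk : k = j <;> simp [funSplitAt_symm_apply, hk, hbc]

lemma prod_funSplitAt_symm [Fintype ι] {M : Type*} [CommMonoid M] (f : ι → β → M) (j : ι)
    (b : β) (r : {i // i ≠ j} → β) :
    ∏ i, f i ((funSplitAt j β).symm (b, r) i) = f j b * ∏ i : {i // i ≠ j}, f i (r i) := by
  rw [Fintype.prod_eq_mul_prod_subtype_ne _ j]
  congr 1
  · simp [funSplitAt_symm_apply]
  · exact prod_congr rfl fun i _ => by simp [funSplitAt_symm_apply, i.2]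

end Equiv

section ProductKernel

variable {ι : Type*} [Fintype ι] [DecidableEq ι]

lemma sum_prod_kernel_mul_eq_sum_funSplitAt (K : ι → Bool → Bool → ℝ)
    (V : (ι → Bool) → ℝ) (s : ι → Bool) (j : ι) :
    ∑ s', (∏ i, K i (s i) (s' i)) * V s'
      = ∑ r : {i // i ≠ j} → Bool, (∏ i : {i // i ≠ j}, K i (s i) (r i)) *
          ∑ b, K j (s j) b * V ((Equiv.funSplitAt j Bool).symm (b, r)) := by
  rw [← (Equiv.funSplitAt j Bool).symm.sum_comp, Fintype.sum_prod_type, sum_comm]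
  refine sum_congr rfl fun r _ => ?_
  simp_rw [Equiv.prod_funSplitAt_symm (fun i => K i (s i)), mul_sum]
  exact sum_congr rfl fun b _ => by ring

theorem monotone_sum_prod_kernel_mul {K : ι → Bool → Bool → ℝ}
    (hK_nonneg : ∀ i σ σ', 0 ≤ K i σ σ') (hK_sum : ∀ i σ, ∑ σ', K i σ σ' = 1)
    (hK_mono : ∀ i, K i false true ≤ K i true true) {V : (ι → Bool) → ℝ} (hV : Monotone V) :
    Monotone fun s : ι → Bool => ∑ s', (∏ i, K i (s i) (s' i)) * V s' := by
  classical
  have : LocallyFiniteOrder (ι → Bool) := Fintype.toLocallyFiniteOrder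
  refine (monotone_iff_forall_covBy _).2 fun s t hst => ?_
  obtain ⟨j, x, hjx, rfl⟩ := Pi.covBy_iff_exists_right_eq.1 hst
  obtain ⟨hs, rfl⟩ : s j = false ∧ x = true := Bool.lt_iff.1 hjx.lt
  simp only [sum_prod_kernel_mul_eq_sum_funSplitAt K V _ j, Function.update_self]
  refine sum_le_sum fun r _ => ?_
  have hrest : ∀ i : {i // i ≠ j}, Function.update s j true i = s i := fun i =>
    Function.update_of_ne i.2 _ _
  simp only [hrest]
  refine mul_le_mul_of_nonneg_left ?_ (prod_nonneg fun i _ => hK_nonneg _ _ _)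
  rw [hs]
  exact Bool.sum_mul_le_sum_mul_of_monotone (hK_sum j false) (hK_sum j true) (hK_mono j)
    (hV.comp (Equiv.monotone_funSplitAt_symm_fst j r))

end ProductKernel

theorem stmt_2_general {N : ℕ}
    (P : Fin N → Bool → Bool → Bool → ℝ)
    (hPnonneg : ∀ i σ α σ', 0 ≤ P i σ α σ')
    (hPsum : ∀ i σ α, P i σ α false + P i σ α true = 1)
    (hPmono : ∀ i α, P i false α true ≤ P i true α true)
    (a : Fin N → Bool)
    (V : (Fin N → Bool) → ℝ) (hV : Monotone V) :
    Monotone (fun s : Fin N → Bool => ∑ s' : Fin N → Bool, jointP P s a s' * V s') :=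
  monotone_sum_prod_kernel_mul (K := fun i σ σ' => P i σ (a i) σ')
    (fun i σ σ' => hPnonneg i σ (a i) σ')
    (fun i σ => by simpa only [Fintype.sum_bool, add_comm] using hPsum i σ (a i))
    (fun i => hPmono i (a i)) hV

/-- If the per-arm kernels are stochastically monotone in the state, then the
one-step expectation of a monotone function is monotone in the state. -/
theorem stmt_2 {N : ℕ} (hN : 1 ≤ N)
    (P : Fin N → Bool → Bool → Bool → ℝ)
    (hPnonneg : ∀ i σ α σ', 0 ≤ P i σ α σ')
    (hPsum : ∀ i σ α, P i σ α false + P i σ α true = 1)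
    (hPmono : ∀ i α, P i false α true ≤ P i true α true)
    (a : Fin N → Bool)
    (V : (Fin N → Bool) → ℝ) (hV : Monotone V) :
    Monotone (fun s : Fin N → Bool => ∑ s' : Fin N → Bool, jointP P s a s' * V s') :=
  stmt_2_general P hPnonneg hPsum hPmono a V hV
end

section
/- Let N ≥ 1 and suppose each per-arm transition kernel satisfies P_i(1,α,1) ≥ P_i(0,α,1) for every α ∈ {0,1}. Fix an action a ∈ {0,1}^N. If V : {0,1}^N → ℝ is submodular, then the map s ↦ Σ_{s' ∈ {0,1}^N} P(s,a,s') V(s') is submodular in s. -/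
/-- Submodularity of a function on the Boolean cube (with coordinatewise ⊔, ⊓). -/
def Submod {N : ℕ} (f : (Fin N → Bool) → ℝ) : Prop :=
  ∀ x y, f (x ⊔ y) + f (x ⊓ y) ≤ f x + f y

open Finset

theorem Fintype.sum_prod_mul_comp {ι β γ R : Type*} [Fintype ι] [DecidableEq ι] [Fintype β]
    [Fintype γ] [DecidableEq γ] [CommSemiring R]
    (w : ι → β → R) (g : ι → β → γ) (F : (ι → γ) → R) :
    ∑ u : ι → β, (∏ i, w i (u i)) * F (fun i => g i (u i))
      = ∑ t : ι → γ, (∏ i, ∑ b with g i b = t i, w i b) * F t := by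
  rw [← Finset.sum_fiberwise univ (fun u i => g i (u i))]
  refine Finset.sum_congr rfl fun t _ => ?_
  rw [Finset.prod_univ_sum, Finset.sum_mul]
  refine Finset.sum_congr (by ext u; simp [funext_iff]) fun u hu => ?_
  congr
  funext i
  simpa using Fintype.mem_piFinset.1 hu i

namespace Submod

variable {N : ℕ}

theorem comp {V : (Fin N → Bool) → ℝ} (hV : Submod V)
    (g : LatticeHom (Fin N → Bool) (Fin N → Bool)) : Submod (V ∘ g) := fun x y => by
  simpa only [Function.comp_apply, map_sup, map_inf] using hV (g x) (g y)

theorem sum_mul {κ : Type*} [Fintype κ] {w : κ → ℝ} {f : κ → (Fin N → Bool) → ℝ}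
    (hw : ∀ k, 0 ≤ w k) (hf : ∀ k, Submod (f k)) :
    Submod (fun s => ∑ k, w k * f k s) := fun x y => by
  rw [← sum_add_distrib, ← sum_add_distrib]
  refine sum_le_sum fun k _ => ?_
  rw [← mul_add, ← mul_add]
  exact mul_le_mul_of_nonneg_left (hf k x y) (hw k)

end Submod

def piGetDLatticeHom {ι α : Type*} [Lattice α] (u : ι → Option α) :
    LatticeHom (ι → α) (ι → α) where
  toFun s i := (u i).getD (s i)
  map_sup' s t := by funext i; dsimp only [Pi.sup_apply]; cases u i <;> simp
  map_inf' s t := by funext i; dsimp only [Pi.inf_apply]; cases u i <;> simp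

/-- `u` stands for the map `fun σ => u.getD σ`: `some true` is the constant `true`, `none` the
identity and `some false` the constant `false`. -/
def splitWeight (k : Bool → Bool → ℝ) : Option Bool → ℝ
  | some true => k false true
  | none => k true true - k false true
  | some false => k true false

theorem splitWeight_nonneg {k : Bool → Bool → ℝ} (hk : ∀ σ σ', 0 ≤ k σ σ')
    (hmono : k false true ≤ k true true) (u : Option Bool) : 0 ≤ splitWeight k u := by
  rcases u with _ | _ | _ <;> simp only [splitWeight, sub_nonneg, hk, hmono]

theorem sum_splitWeight_getD {k : Bool → Bool → ℝ} (hk : ∀ σ, k σ false + k σ true = 1)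
    (σ σ' : Bool) : ∑ u with u.getD σ = σ', splitWeight k u = k σ σ' := by
  have := hk false
  have := hk true
  cases σ <;> cases σ' <;> simp [Fintype.sum_option, sum_filter, splitWeight]; linarith

theorem stmt_3_general {N : ℕ}
    (P : Fin N → Bool → Bool → Bool → ℝ)
    (hPnonneg : ∀ i σ α σ', 0 ≤ P i σ α σ')
    (hPsum : ∀ i σ α, P i σ α false + P i σ α true = 1)
    (hPmono : ∀ i α, P i false α true ≤ P i true α true)
    (a : Fin N → Bool)
    (V : (Fin N → Bool) → ℝ) (hV : Submod V) :
    Submod (fun s : Fin N → Bool => ∑ s' : Fin N → Bool, jointP P s a s' * V s') := by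
  let w i := splitWeight (fun σ σ' => P i σ (a i) σ')
  have hrepr (s : Fin N → Bool) :
      ∑ u : Fin N → Option Bool, (∏ i, w i (u i)) * V (piGetDLatticeHom u s)
        = ∑ s', jointP P s a s' * V s' := by
    refine (Fintype.sum_prod_mul_comp w (fun i u => u.getD (s i)) V).trans ?_
    simp only [w, sum_splitWeight_getD (hPsum _ · _), jointP]
  simp only [← hrepr]
  exact Submod.sum_mul
    (fun u => prod_nonneg fun i _ => splitWeight_nonneg (hPnonneg i · _ ·) (hPmono i _) _)
    (fun u => hV.comp _)

/-- If the per-arm kernels are stochastically monotone in the state, then the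
one-step expectation of a submodular function is submodular in the state. -/
theorem stmt_3 {N : ℕ} (hN : 1 ≤ N)
    (P : Fin N → Bool → Bool → Bool → ℝ)
    (hPnonneg : ∀ i σ α σ', 0 ≤ P i σ α σ')
    (hPsum : ∀ i σ α, P i σ α false + P i σ α true = 1)
    (hPmono : ∀ i α, P i false α true ≤ P i true α true)
    (a : Fin N → Bool)
    (V : (Fin N → Bool) → ℝ) (hV : Submod V) :
    Submod (fun s : Fin N → Bool => ∑ s' : Fin N → Bool, jointP P s a s' * V s') :=
  stmt_3_general P hPnonneg hPsum hPmono a V hV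
end

section
/- Let N ≥ 1 and suppose each per-arm transition kernel satisfies P_i(σ,1,1) ≥ P_i(σ,0,1) for every σ ∈ {0,1}. Fix a state s ∈ {0,1}^N. If V : {0,1}^N → ℝ is monotone, then the map a ↦ Σ_{s' ∈ {0,1}^N} P(s,a,s') V(s') is monotone in the action a. -/
/-!
Induction on the number of arms. Conditioning on the next state `b` of the first arm writes the
expectation as `∑ b, K₀ (a₀, b) * W b`, where `W b` is the expectation over the remaining arms:
`W` is monotone in the remaining actions by induction and in `b` because `V` is monotone.
Raising `a₀` only moves probability mass of the first arm from `false` to `true`, which cannot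
decrease `∑ b, K₀ (a₀, b) * W b`.
-/

/-- `K i α σ'` is the probability that arm `i` moves to `σ'` under action `α`. -/
def prodExpect {N : ℕ} (K : Fin N → Bool → Bool → ℝ) (V : (Fin N → Bool) → ℝ)
    (a : Fin N → Bool) : ℝ :=
  ∑ s', (∏ i, K i (a i) (s' i)) * V s'

lemma Bool.monotone_of_false_le_true {α : Type*} [Preorder α] {f : Bool → α}
    (h : f false ≤ f true) : Monotone f := by
  intro x y hxy
  cases x <;> cases y
  all_goals first | exact le_rfl | exact h | exact absurd hxy (by decide)

lemma Bool.sum_mul_le_sum_mul_of_le_true {p q g : Bool → ℝ}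
    (hmass : p false + p true = q false + q true) (htrue : p true ≤ q true)
    (hg : g false ≤ g true) :
    ∑ b, p b * g b ≤ ∑ b, q b * g b := by
  have hdiff : ∑ b, q b * g b - ∑ b, p b * g b = (q true - p true) * (g true - g false) := by
    simp only [Fintype.sum_bool]
    linear_combination (-g false) * hmass
  exact sub_nonneg.1 <| hdiff ▸ mul_nonneg (sub_nonneg.2 htrue) (sub_nonneg.2 hg)

lemma prodExpect_mono_right {N : ℕ} {K : Fin N → Bool → Bool → ℝ} (hK : ∀ i α σ', 0 ≤ K i α σ')
    {V W : (Fin N → Bool) → ℝ} (hVW : V ≤ W) (a : Fin N → Bool) :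
    prodExpect K V a ≤ prodExpect K W a :=
  Finset.sum_le_sum fun s' _ =>
    mul_le_mul_of_nonneg_left (hVW s') (Finset.prod_nonneg fun _ _ => hK _ _ _)

lemma prodExpect_succ {n : ℕ} (K : Fin (n + 1) → Bool → Bool → ℝ)
    (V : (Fin (n + 1) → Bool) → ℝ) (a : Fin (n + 1) → Bool) :
    prodExpect K V a =
      ∑ b, K 0 (a 0) b * prodExpect (Fin.tail K) (fun t => V (Fin.cons b t)) (Fin.tail a) := by
  rw [prodExpect, ← (Fin.consEquiv fun _ => Bool).sum_comp, Fintype.sum_prod_type]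
  refine Finset.sum_congr rfl fun b _ => ?_
  rw [prodExpect, Finset.mul_sum]
  refine Finset.sum_congr rfl fun t _ => ?_
  simp only [Fin.prod_univ_succ, Fin.tail]
  exact mul_assoc _ _ _

theorem prodExpect_monotone {N : ℕ} (K : Fin N → Bool → Bool → ℝ)
    (hK : ∀ i α σ', 0 ≤ K i α σ') (hKsum : ∀ i α, K i α false + K i α true = 1)
    (hKmono : ∀ i, K i false true ≤ K i true true) {V : (Fin N → Bool) → ℝ} (hV : Monotone V) :
    Monotone (prodExpect K V) := by
  induction N with
  | zero => exact Subsingleton.monotone _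
  | succ n ih =>
    intro a a' haa'
    rw [← Fin.cons_self_tail a, ← Fin.cons_self_tail a', Fin.cons_le_cons] at haa'
    obtain ⟨h0, htail⟩ := haa'
    have ih' := fun b => ih (Fin.tail K) (fun _ => hK _) (fun _ => hKsum _) (fun _ => hKmono _)
      (V := fun t => V (Fin.cons b t)) fun t t' h => hV (Fin.cons_le_cons.2 ⟨le_rfl, h⟩)
    have hK0 : K 0 (a 0) true ≤ K 0 (a' 0) true :=
      Bool.monotone_of_false_le_true (f := fun α => K 0 α true) (hKmono 0) h0
    rw [prodExpect_succ, prodExpect_succ]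
    calc ∑ b, K 0 (a 0) b * prodExpect (Fin.tail K) (fun t => V (Fin.cons b t)) (Fin.tail a)
        ≤ ∑ b, K 0 (a 0) b * prodExpect (Fin.tail K) (fun t => V (Fin.cons b t)) (Fin.tail a') :=
          Finset.sum_le_sum fun b _ => mul_le_mul_of_nonneg_left (ih' b htail) (hK _ _ _)
      _ ≤ ∑ b, K 0 (a' 0) b * prodExpect (Fin.tail K) (fun t => V (Fin.cons b t)) (Fin.tail a') :=
          Bool.sum_mul_le_sum_mul_of_le_true (by rw [hKsum, hKsum]) hK0 <|
            prodExpect_mono_right (fun _ => hK _)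
              (fun t => hV (Fin.cons_le_cons.2 ⟨Bool.false_le true, le_rfl⟩)) _

theorem stmt_4_general {N : ℕ}
    (P : Fin N → Bool → Bool → Bool → ℝ)
    (hPnonneg : ∀ i σ α σ', 0 ≤ P i σ α σ')
    (hPsum : ∀ i σ α, P i σ α false + P i σ α true = 1)
    (hPmono : ∀ i σ, P i σ false true ≤ P i σ true true)
    (s : Fin N → Bool)
    (V : (Fin N → Bool) → ℝ) (hV : Monotone V) :
    Monotone (fun a : Fin N → Bool => ∑ s' : Fin N → Bool, jointP P s a s' * V s') :=
  prodExpect_monotone (fun i => P i (s i)) (fun i => hPnonneg i _) (fun i => hPsum i _)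
    (fun i => hPmono i _) hV

/-- If the per-arm kernels are stochastically monotone in the action, then the
one-step expectation of a monotone function is monotone in the action. -/
theorem stmt_4 {N : ℕ} (hN : 1 ≤ N)
    (P : Fin N → Bool → Bool → Bool → ℝ)
    (hPnonneg : ∀ i σ α σ', 0 ≤ P i σ α σ')
    (hPsum : ∀ i σ α, P i σ α false + P i σ α true = 1)
    (hPmono : ∀ i σ, P i σ false true ≤ P i σ true true)
    (s : Fin N → Bool)
    (V : (Fin N → Bool) → ℝ) (hV : Monotone V) :
    Monotone (fun a : Fin N → Bool => ∑ s' : Fin N → Bool, jointP P s a s' * V s') :=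
  stmt_4_general P hPnonneg hPsum hPmono s V hV
end

section
/- Let N ≥ 1, let γ ≥ 0, and suppose each per-arm transition kernel satisfies P_i(σ,1,1) ≥ P_i(σ,0,1) for every σ ∈ {0,1}. Fix a state s ∈ {0,1}^N. Suppose V : {0,1}^N → ℝ is monotone and submodular, and suppose the map a ↦ R(s,a) is monotone and submodular. Then the Q-function Q(a) := R(s,a) + γ Σ_{s' ∈ {0,1}^N} P(s,a,s') V(s') is monotone and submodular in the action a. -/
open Finset

section Pushforward

variable {ι β γ R : Type*} [Fintype ι] [DecidableEq ι] [Fintype β] [Fintype γ] [DecidableEq γ]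
  [CommSemiring R]

theorem sum_pi_prod_mul_comp (w : ι → β → R) (g : ι → β → γ) (F : (ι → γ) → R) :
    ∑ t : ι → β, (∏ i, w i (t i)) * F (fun i => g i (t i)) =
      ∑ x : ι → γ, (∏ i, ∑ b ∈ univ.filter (fun b => g i b = x i), w i b) * F x := by
  rw [← Finset.sum_fiberwise univ (fun t i => g i (t i))]
  refine Finset.sum_congr rfl fun x _ => ?_
  have hfiber : univ.filter (fun t : ι → β => (fun i => g i (t i)) = x) =
      Fintype.piFinset fun i => univ.filter fun b => g i b = x i := by
    ext t
    simp [Fintype.mem_piFinset, funext_iff]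
  rw [prod_univ_sum, ← hfiber, Finset.sum_mul]
  exact Finset.sum_congr rfl fun t ht => by rw [(Finset.mem_filter.1 ht).2]

end Pushforward

theorem Submod.add {N : ℕ} {f g : (Fin N → Bool) → ℝ} (hf : Submod f) (hg : Submod g) :
    Submod (fun a => f a + g a) := fun x y => by
  linarith [hf x y, hg x y]

theorem Submod.const_mul {N : ℕ} {f : (Fin N → Bool) → ℝ} (hf : Submod f) {c : ℝ} (hc : 0 ≤ c) :
    Submod (fun a => c * f a) := fun x y => by
  simpa only [mul_add] using mul_le_mul_of_nonneg_left (hf x y) hc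

theorem Submod.sum {N : ℕ} {T : Type*} [Fintype T] {f : T → (Fin N → Bool) → ℝ}
    (hf : ∀ t, Submod (f t)) : Submod (fun a => ∑ t, f t a) := fun x y => by
  simpa only [← Finset.sum_add_distrib] using Finset.sum_le_sum fun t _ => hf t x y

theorem Submod.comp_latticeHom {N : ℕ} {f : (Fin N → Bool) → ℝ} (hf : Submod f)
    (g : LatticeHom (Fin N → Bool) (Fin N → Bool)) : Submod (fun a => f (g a)) := fun x y => by
  simpa only [map_sup, map_inf] using hf (g x) (g y)

def LatticeHom.supInf {α : Type*} [DistribLattice α] (lo hi : α) : LatticeHom α α where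
  toFun a := lo ⊔ (a ⊓ hi)
  map_sup' x y := by simp only [inf_sup_right]; exact sup_sup_distrib_left lo _ _
  map_inf' x y := by
    show lo ⊔ (x ⊓ y ⊓ hi) = (lo ⊔ x ⊓ hi) ⊓ (lo ⊔ y ⊓ hi)
    rw [← sup_inf_left, inf_inf_distrib_right]

section Coupling

variable (k : Bool → Bool → ℝ)

/-- A monotone coupling of the next-state laws `k false` and `k true` of one arm: from the coupled
pair `(l, h)` the next state under action `α` is `l ⊔ (α ⊓ h)`. -/
def armCoupling : Bool × Bool → ℝ
  | (false, false) => k true false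
  | (false, true) => k true true - k false true
  | (true, false) => 0
  | (true, true) => k false true

variable {k}

theorem armCoupling_nonneg (hk : ∀ α σ, 0 ≤ k α σ) (hmono : k false true ≤ k true true)
    (b : Bool × Bool) : 0 ≤ armCoupling k b := by
  rcases b with ⟨_ | _, _ | _⟩
  · exact hk true false
  · exact sub_nonneg.2 hmono
  · exact le_rfl
  · exact hk false true

theorem sum_armCoupling (hsum : ∀ α, k α false + k α true = 1) (α σ : Bool) :
    ∑ b ∈ univ.filter (fun b : Bool × Bool => b.1 ⊔ (α ⊓ b.2) = σ), armCoupling k b = k α σ := by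
  have h0 := hsum false
  have h1 := hsum true
  cases α <;> cases σ <;>
    · rw [Finset.sum_filter, Fintype.sum_prod_type]
      simp [armCoupling]
      try linarith

end Coupling

section Bellman

variable {N : ℕ} {P : Fin N → Bool → Bool → Bool → ℝ} {s : Fin N → Bool} {V : (Fin N → Bool) → ℝ}

theorem sum_jointP_mul_eq_sum_coupling (hPsum : ∀ i σ α, P i σ α false + P i σ α true = 1)
    (a : Fin N → Bool) :
    ∑ s', jointP P s a s' * V s' = ∑ t : Fin N → Bool × Bool,
      (∏ i, armCoupling (P i (s i)) (t i)) *
        V (LatticeHom.supInf (fun i => (t i).1) (fun i => (t i).2) a) := by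
  calc ∑ s', jointP P s a s' * V s'
      = ∑ x, (∏ i, ∑ b ∈ univ.filter (fun b : Bool × Bool => b.1 ⊔ (a i ⊓ b.2) = x i),
          armCoupling (P i (s i)) b) * V x := by
        simp only [jointP, sum_armCoupling (hPsum _ _)]
    _ = _ := (sum_pi_prod_mul_comp _ _ V).symm

theorem Monotone.sum_jointP_mul (hPnonneg : ∀ i σ α σ', 0 ≤ P i σ α σ')
    (hPsum : ∀ i σ α, P i σ α false + P i σ α true = 1)
    (hPmono : ∀ i σ, P i σ false true ≤ P i σ true true) (hV : Monotone V) :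
    Monotone (fun a => ∑ s', jointP P s a s' * V s') := fun x y hxy => by
  simp only [sum_jointP_mul_eq_sum_coupling hPsum]
  refine Finset.sum_le_sum fun t _ => mul_le_mul_of_nonneg_left (hV ?_) ?_
  · exact OrderHomClass.mono _ hxy
  · exact prod_nonneg fun i _ => armCoupling_nonneg (hPnonneg i (s i)) (hPmono i (s i)) _

theorem Submod.sum_jointP_mul (hPnonneg : ∀ i σ α σ', 0 ≤ P i σ α σ')
    (hPsum : ∀ i σ α, P i σ α false + P i σ α true = 1)
    (hPmono : ∀ i σ, P i σ false true ≤ P i σ true true) (hV : Submod V) :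
    Submod (fun a => ∑ s', jointP P s a s' * V s') := by
  simp only [sum_jointP_mul_eq_sum_coupling hPsum]
  refine Submod.sum fun t => (hV.comp_latticeHom _).const_mul ?_
  exact prod_nonneg fun i _ => armCoupling_nonneg (hPnonneg i (s i)) (hPmono i (s i)) _

end Bellman

theorem stmt_6_general {N : ℕ} (γ : ℝ) (hγ0 : 0 ≤ γ)
    (P : Fin N → Bool → Bool → Bool → ℝ)
    (hPnonneg : ∀ i σ α σ', 0 ≤ P i σ α σ')
    (hPsum : ∀ i σ α, P i σ α false + P i σ α true = 1)
    (hPmono : ∀ i σ, P i σ false true ≤ P i σ true true)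
    (s : Fin N → Bool)
    (R : (Fin N → Bool) → (Fin N → Bool) → ℝ)
    (hRmono : Monotone (R s)) (hRsub : Submod (R s))
    (V : (Fin N → Bool) → ℝ) (hVmono : Monotone V) (hVsub : Submod V) :
    Monotone (fun a : Fin N → Bool =>
        R s a + γ * ∑ s' : Fin N → Bool, jointP P s a s' * V s') ∧
    Submod (fun a : Fin N → Bool =>
        R s a + γ * ∑ s' : Fin N → Bool, jointP P s a s' * V s') :=
  ⟨hRmono.add ((hVmono.sum_jointP_mul hPnonneg hPsum hPmono).const_mul hγ0),
    hRsub.add ((hVsub.sum_jointP_mul hPnonneg hPsum hPmono).const_mul hγ0)⟩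

/-- The one-step Bellman backup `Q(a) = R(s,a) + γ ∑_{s'} P(s,a,s') V(s')` of a
monotone submodular continuation value is monotone and submodular in the action. -/
theorem stmt_6 {N : ℕ} (hN : 1 ≤ N) (γ : ℝ) (hγ0 : 0 ≤ γ)
    (P : Fin N → Bool → Bool → Bool → ℝ)
    (hPnonneg : ∀ i σ α σ', 0 ≤ P i σ α σ')
    (hPsum : ∀ i σ α, P i σ α false + P i σ α true = 1)
    (hPmono : ∀ i σ, P i σ false true ≤ P i σ true true)
    (s : Fin N → Bool)
    (R : (Fin N → Bool) → (Fin N → Bool) → ℝ)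
    (hRmono : Monotone (R s)) (hRsub : Submod (R s))
    (V : (Fin N → Bool) → ℝ) (hVmono : Monotone V) (hVsub : Submod V) :
    Monotone (fun a : Fin N → Bool =>
        R s a + γ * ∑ s' : Fin N → Bool, jointP P s a s' * V s') ∧
    Submod (fun a : Fin N → Bool =>
        R s a + γ * ∑ s' : Fin N → Bool, jointP P s a s' * V s') :=
  stmt_6_general γ hγ0 P hPnonneg hPsum hPmono s R hRmono hRsub V hVmono hVsub
end
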